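/- Few shifts have large correlation with any fixed direction: for every x ∈ ℝ^L, every unit vector Q ∈ ℝ^L (‖Q‖ = 1), and every h > 0, the number of shifts N_Q(h) = |{ ℓ ∈ {0,…,L−1} : L^{−1/2}·|⟨x, R_ℓ^{−1} Q⟩| ≥ h }| satisfies N_Q(h) ≤ h^{−2}·‖ℱ*x‖_∞², where ‖ℱ*x‖_∞ = max_{0≤k≤L−1} |(ℱ*x)_k| is the maximal modulus of a DFT coefficient of x. -/

import Mathlib

/-!
Write `c ℓ = ∑ j, x j * Q (j - ℓ)` for the correlations. On `ZMod L` the discrete Fourier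
transform turns this cross-correlation into the product `𝓕 x k * 𝓕 Q (-k)`, so Parseval's
identity gives `∑ ℓ, c ℓ ^ 2 ≤ L * ‖ℱ*x‖_∞² * ‖Q‖²`. Chebyshev's counting inequality then bounds
the number of shifts with `L^{-1/2} |c ℓ| ≥ h` by `h⁻² ‖ℱ*x‖_∞²`.
-/

open scoped ENNReal

namespace MRAformal

/-- The DFT coefficients `(ℱ*x)_k = L^{−1/2}·∑_j x_j·e^{−2πi·kj/L}` of `x ∈ ℝ^L`. -/
noncomputable def dft (L : ℕ) (x : Fin L → ℝ) (k : Fin L) : ℂ :=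
  (Real.sqrt L : ℂ)⁻¹ *
    ∑ j : Fin L, (x j : ℂ) *
      Complex.exp (-2 * (Real.pi : ℂ) * Complex.I * (k.val : ℂ) * (j.val : ℂ) / (L : ℂ))

open Finset ZMod ComplexConjugate

theorem card_filter_le_inv_sq_mul_sum_sq {ι : Type*} (s : Finset ι) (f : ι → ℝ) {h : ℝ}
    (hh : 0 < h) :
    (#{i ∈ s | h ≤ f i} : ℝ) ≤ h⁻¹ ^ 2 * ∑ i ∈ s, f i ^ 2 := by
  rw [inv_pow, inv_mul_eq_div, le_div_iff₀ (by positivity), ← nsmul_eq_mul]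
  calc #{i ∈ s | h ≤ f i} • h ^ 2 ≤ ∑ i ∈ s with h ≤ f i, f i ^ 2 :=
        card_nsmul_le_sum _ _ _ fun i hi => by
          have := (mem_filter.1 hi).2
          gcongr
    _ ≤ ∑ i ∈ s, f i ^ 2 :=
        sum_le_sum_of_subset_of_nonneg (filter_subset _ _) fun _ _ _ => sq_nonneg _

section ZModFourier

variable {N : ℕ} [NeZero N]

theorem sum_dft_mul_conj_dft (Φ Ψ : ZMod N → ℂ) :
    ∑ k, 𝓕 Φ k * conj (𝓕 Ψ k) = N * ∑ j, Φ j * conj (Ψ j) := by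
  have conj_dft_dft (j : ZMod N) :
      conj (𝓕 (𝓕 Ψ) (-j)) = ∑ k, stdAddChar (-(j * k)) * conj (𝓕 Ψ k) := by
    rw [dft_apply, map_sum]
    refine sum_congr rfl fun k _ => ?_
    rw [smul_eq_mul, map_mul, ← AddChar.map_neg_eq_conj]
    ring_nf
  calc ∑ k, 𝓕 Φ k * conj (𝓕 Ψ k)
      = ∑ j, Φ j * conj (𝓕 (𝓕 Ψ) (-j)) := by
        simp only [conj_dft_dft, dft_apply Φ, smul_eq_mul, sum_mul, mul_sum]
        rw [sum_comm]
        exact sum_congr rfl fun j _ => sum_congr rfl fun k _ => by ring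
    _ = N * ∑ j, Φ j * conj (Ψ j) := by
        simp only [dft_dft, neg_neg, smul_eq_mul, map_mul, map_natCast, mul_sum]
        exact sum_congr rfl fun j _ => by ring

theorem sum_norm_sq_dft (Φ : ZMod N → ℂ) : ∑ k, ‖𝓕 Φ k‖ ^ 2 = N * ∑ j, ‖Φ j‖ ^ 2 := by
  have h := sum_dft_mul_conj_dft Φ Φ
  simp only [Complex.mul_conj'] at h
  exact_mod_cast h

theorem dft_correlation (Φ Ψ : ZMod N → ℂ) (k : ZMod N) :
    𝓕 (fun ℓ => ∑ j, Φ j * Ψ (j - ℓ)) k = 𝓕 Φ k * 𝓕 Ψ (-k) := by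
  simp only [dft_apply, smul_eq_mul]
  rw [sum_mul_sum]
  simp only [mul_sum]
  rw [sum_comm]
  refine sum_congr rfl fun j _ => Fintype.sum_equiv (Equiv.subLeft j) _ _ fun ℓ => ?_
  rw [Equiv.subLeft_apply, show -(ℓ * k) = -(j * k) + -((j - ℓ) * -k) by ring,
    AddChar.map_add_eq_mul]
  ring

theorem sum_norm_sq_correlation_le (Φ Ψ : ZMod N → ℂ) {M : ℝ} (hM : ∀ k, ‖𝓕 Φ k‖ ^ 2 ≤ M) :
    ∑ ℓ, ‖∑ j, Φ j * Ψ (j - ℓ)‖ ^ 2 ≤ M * ∑ j, ‖Ψ j‖ ^ 2 := by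
  have hN : (0 : ℝ) < N := by exact_mod_cast (NeZero.pos N)
  refine le_of_mul_le_mul_left ?_ hN
  calc (N : ℝ) * ∑ ℓ, ‖∑ j, Φ j * Ψ (j - ℓ)‖ ^ 2
      = ∑ k, ‖𝓕 Φ k‖ ^ 2 * ‖𝓕 Ψ (-k)‖ ^ 2 := by
        simp only [← sum_norm_sq_dft, dft_correlation, norm_mul, mul_pow]
    _ ≤ ∑ k, M * ‖𝓕 Ψ (-k)‖ ^ 2 := by gcongr with k; exact hM k
    _ = N * (M * ∑ j, ‖Ψ j‖ ^ 2) := by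
        have sum_neg : ∑ k, ‖𝓕 Ψ (-k)‖ ^ 2 = ∑ k, ‖𝓕 Ψ k‖ ^ 2 :=
          Equiv.sum_comp (Equiv.neg _) fun k => ‖𝓕 Ψ k‖ ^ 2
        rw [← mul_sum, sum_neg, sum_norm_sq_dft]
        ring

end ZModFourier

section FinBridge

variable {L : ℕ} [NeZero L]

open Fin.CommRing in
theorem finEquiv_apply (m : Fin L) : finEquiv L m = (m.val : ZMod L) := by
  conv_lhs => rw [← Fin.cast_val_eq_self m]
  exact map_natCast (finEquiv L) _

theorem sum_finEquiv {M : Type*} [AddCommMonoid M] (F : ZMod L → M) :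
    ∑ j, F (finEquiv L j) = ∑ j, F j :=
  Equiv.sum_comp (finEquiv L).toEquiv F

def ofFin (x : Fin L → ℝ) (j : ZMod L) : ℂ := x ((finEquiv L).symm j)

@[simp]
theorem ofFin_finEquiv (x : Fin L → ℝ) (j : Fin L) : ofFin x (finEquiv L j) = x j := by
  simp [ofFin]

theorem dft_eq_inv_sqrt_mul_dft_ofFin (x : Fin L → ℝ) (k : Fin L) :
    dft L x k = (√L : ℂ)⁻¹ * 𝓕 (ofFin x) (finEquiv L k) := by
  rw [dft, dft_apply, ← sum_finEquiv]
  congr 1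
  refine sum_congr rfl fun j _ => ?_
  have hexp : -(finEquiv L j * finEquiv L k) = ((-(j.val * k.val) : ℤ) : ZMod L) := by
    push_cast [finEquiv_apply]
    ring
  rw [ofFin_finEquiv, smul_eq_mul, hexp, stdAddChar_coe]
  push_cast
  ring_nf

theorem norm_sq_dft_ofFin_le (x : Fin L → ℝ) (k : ZMod L) :
    ‖𝓕 (ofFin x) k‖ ^ 2 ≤ L * ⨆ k, ‖dft L x k‖ ^ 2 := by
  have hL : (0 : ℝ) < L := by exact_mod_cast NeZero.pos L
  obtain ⟨k, rfl⟩ := (finEquiv L).surjective k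
  have hk := le_ciSup (Set.finite_range fun k => ‖dft L x k‖ ^ 2).bddAbove k
  rw [dft_eq_inv_sqrt_mul_dft_ofFin, norm_mul, mul_pow, norm_inv, Complex.norm_real,
    Real.norm_of_nonneg (Real.sqrt_nonneg _), inv_pow, Real.sq_sqrt hL.le] at hk
  exact (inv_mul_le_iff₀ hL).mp hk

theorem sum_ofFin_mul_ofFin_sub (x Q : Fin L → ℝ) (ℓ : Fin L) :
    ∑ j, ofFin x j * ofFin Q (j - finEquiv L ℓ) = ((∑ j, x j * Q (j - ℓ) : ℝ) : ℂ) := by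
  rw [← sum_finEquiv]
  push_cast
  simp only [← map_sub, ofFin_finEquiv]

theorem sum_sq_correlation_le (x Q : Fin L → ℝ) :
    ∑ ℓ, (∑ j, x j * Q (j - ℓ)) ^ 2 ≤ L * (⨆ k, ‖dft L x k‖ ^ 2) * ∑ j, Q j ^ 2 := by
  calc ∑ ℓ, (∑ j, x j * Q (j - ℓ)) ^ 2
      = ∑ ℓ, ‖∑ j, ofFin x j * ofFin Q (j - ℓ)‖ ^ 2 := by
        simp only [← sum_finEquiv fun ℓ => ‖∑ j, ofFin x j * ofFin Q (j - ℓ)‖ ^ 2,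
          sum_ofFin_mul_ofFin_sub, Complex.norm_real, Real.norm_eq_abs, sq_abs]
    _ ≤ L * (⨆ k, ‖dft L x k‖ ^ 2) * ∑ j, ‖ofFin Q j‖ ^ 2 :=
        sum_norm_sq_correlation_le _ _ (norm_sq_dft_ofFin_le x)
    _ = L * (⨆ k, ‖dft L x k‖ ^ 2) * ∑ j, Q j ^ 2 := by
        simp only [← sum_finEquiv, ofFin_finEquiv, Complex.norm_real, Real.norm_eq_abs, sq_abs]

end FinBridge

open scoped Classical in
/-- few shifts have large correlation with any fixed direction. For
`x ∈ ℝ^L`, a unit vector `Q`, and `h > 0`,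
`N_Q(h) = #{ℓ : L^{−1/2}|⟨x, R_ℓ⁻¹ Q⟩| ≥ h} ≤ h⁻²·‖ℱ*x‖_∞²`,
where `⟨x, R_ℓ⁻¹ Q⟩ = ∑_j x_j Q_{j−ℓ}` and `‖ℱ*x‖_∞ = max_k |(ℱ*x)_k|`. -/
theorem few_shifts_have_large_correlation (L : ℕ) (x Q : Fin L → ℝ)
    (hQ : ∑ j, Q j ^ 2 = 1) (h : ℝ) (hh : 0 < h) :
    ((Finset.univ.filter fun ℓ : Fin L =>
        h ≤ (Real.sqrt L)⁻¹ * |∑ j, x j * Q (j - ℓ)|).card : ℝ) ≤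
      h⁻¹ ^ 2 * ⨆ k : Fin L, ‖dft L x k‖ ^ 2 := by
  rcases eq_or_ne L 0 with rfl | hL
  · simp
  have : NeZero L := ⟨hL⟩
  have hL' : (0 : ℝ) < L := by exact_mod_cast NeZero.pos L
  calc _ ≤ h⁻¹ ^ 2 * ∑ ℓ, ((√L)⁻¹ * |∑ j, x j * Q (j - ℓ)|) ^ 2 :=
        card_filter_le_inv_sq_mul_sum_sq _ _ hh
    _ = h⁻¹ ^ 2 * ((L : ℝ)⁻¹ * ∑ ℓ, (∑ j, x j * Q (j - ℓ)) ^ 2) := by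
        simp only [mul_pow, sq_abs, inv_pow, Real.sq_sqrt hL'.le, mul_sum]
    _ ≤ h⁻¹ ^ 2 * ((L : ℝ)⁻¹ * (L * (⨆ k, ‖dft L x k‖ ^ 2) * ∑ j, Q j ^ 2)) := by
        gcongr
        exact sum_sq_correlation_le x Q
    _ = h⁻¹ ^ 2 * ⨆ k, ‖dft L x k‖ ^ 2 := by
        rw [hQ]
        field_simp

end MRAformal
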